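/- arXiv:1811.05444 — 2 statements merged into one kernel-verified Lean document; each statement's English description precedes it below -/
import Mathlib

section
/- Suppose 2 ≤ k < n, let J be a countably infinite set, and let R ⊆ [J]^k be a k-uniform hypergraph such that every finite k-uniform hypergraph embeds into (J, R) as an induced subhypergraph (i.e., for every finite k-uniform hypergraph (F, E) there is an injection g : F → J with, for all k-element v ⊆ F, v ∈ E if and only if g[v] ∈ R). Then for every index set I and every S ⊆ [I]^k, the pattern Δ_{n,k}(S) is an instance of Δ_{n,k}(R). -/
universe x y

/-- Δ' on J is an instance of Δ on I. -/
def IsInstanceOf {J : Type*} {I : Type*} (Δ' : Set (Finset J)) (Δ : Set (Finset I)) : Prop :=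
  ∀ s : Finset J, ∃ f : J → I, ∀ t ⊆ s,
    (t ∈ Δ' ↔ (letI := Classical.decEq I; t.image f) ∈ Δ)

/-- Δ^m : the pattern on [I]^{≤m} consisting of finite s with ⋃ s ∈ Δ. -/
def patternPow {I : Type x} (Δ : Set (Finset I)) (m : ℕ) :
    Set (Finset {u : Finset I // u.card ≤ m}) :=
  letI := Classical.decEq I
  {s | s.sup (fun u => u.1) ∈ Δ}

/-- The pattern Δ_{n,k}(S) on [I]^{k-1}: finite sets s of (k-1)-element subsets of I such that
there is no (n-1)-element v ⊆ I with all (k-1)-element subsets of v in s and all k-element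
subsets of v in S. -/
def deltaNK {I : Type x} (n k : ℕ) (S : Set (Finset I)) :
    Set (Finset {u : Finset I // u.card = k - 1}) :=
  {s | ¬ ∃ v : Finset I, v.card = n - 1 ∧
      (∀ (u : Finset I) (hu : u.card = k - 1), u ⊆ v →
        (⟨u, hu⟩ : {u : Finset I // u.card = k - 1}) ∈ s) ∧
      (∀ w : Finset I, w ⊆ v → w.card = k → w ∈ S)}

/-- S ⊆ [I]^k is n-clique-free: no n-element w ⊆ I has all its k-element subsets in S. -/
def CliqueFreeSet {I : Type x} (n k : ℕ) (S : Set (Finset I)) : Prop :=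
  ¬ ∃ w : Finset I, w.card = n ∧ ∀ v : Finset I, v ⊆ w → v.card = k → v ∈ S

/-!
Given a finite `s`, let `A` be the union of its members. Since `(J, R)` contains every finite
`k`-uniform hypergraph as an induced subhypergraph, there is a map `g : I → J` that is injective
on `A` and carries `S ∩ [A]^k` exactly onto `R ∩ [g A]^k`. Taking images under `g` is then a
bijection between the `(n-1)`-sets spanned by `t ⊆ s` that are `S`-cliques and those spanned by
`g[t]` that are `R`-cliques: every such set is covered by the `(k-1)`-sets it contains, so it
lies inside `A`, respectively inside `g A`.
-/

open Finset Function

def IsInducedUniversal {J : Type*} (k : ℕ) (R : Set (Finset J)) : Prop :=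
  ∀ (m : ℕ) (E : Set (Finset (Fin m))), (∀ v ∈ E, v.card = k) →
    ∃ g : Fin m ↪ J, ∀ v : Finset (Fin m), v.card = k → (v ∈ E ↔ v.map g ∈ R)

theorem IsInducedUniversal.exists_injOn {I J : Type*} [Nonempty J] [DecidableEq J] {k : ℕ}
    {R : Set (Finset J)} (hR : IsInducedUniversal k R) (S : Set (Finset I)) (A : Finset I) :
    ∃ g : I → J, Set.InjOn g A ∧ ∀ w ⊆ A, w.card = k → (w ∈ S ↔ w.image g ∈ R) := by
  obtain ⟨m, φ, rfl⟩ : ∃ (m : ℕ) (φ : Fin m ↪ I), univ.map φ = A :=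
    ⟨_, A.equivFin.symm.toEmbedding.trans (.subtype _), by
      rw [← map_map, map_univ_equiv, univ_eq_attach, attach_map_val]⟩
  obtain ⟨g₀, hg₀⟩ := hR m {v | v.card = k ∧ v.map φ ∈ S} fun _ hv => hv.1
  set g := extend φ g₀ fun _ => Classical.arbitrary J
  have hgφ : ∀ i, g (φ i) = g₀ i := φ.injective.extend_apply _ _
  refine ⟨g, ?_, ?_⟩
  · rw [coe_map]
    rintro _ ⟨i, -, rfl⟩ _ ⟨j, -, rfl⟩ hij
    simp only [hgφ] at hij
    exact congrArg φ (g₀.injective hij)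
  · intro w hw hwk
    obtain ⟨w, -, rfl⟩ := subset_map_iff.1 hw
    have hmap : (w.map φ).image g = w.map g₀ := by
      ext y
      simp [hgφ]
    rw [card_map] at hwk
    rw [hmap, ← hg₀ w hwk]
    exact ⟨fun h => ⟨hwk, h⟩, And.right⟩

def IsSpannedClique {I : Type*} (n k : ℕ) (S : Set (Finset I))
    (s : Finset {u : Finset I // u.card = k - 1}) (v : Finset I) : Prop :=
  v.card = n - 1 ∧ (∀ (u : Finset I) (hu : u.card = k - 1), u ⊆ v → ⟨u, hu⟩ ∈ s) ∧
    ∀ w ⊆ v, w.card = k → w ∈ S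

theorem mem_deltaNK_iff {I : Type*} {n k : ℕ} {S : Set (Finset I)}
    {s : Finset {u : Finset I // u.card = k - 1}} :
    s ∈ deltaNK n k S ↔ ¬ ∃ v, IsSpannedClique n k S s v :=
  Iff.rfl

section Transfer

variable {I J : Type*} [DecidableEq J] {n k : ℕ} {S : Set (Finset I)} {R : Set (Finset J)}
  {s : Finset {u : Finset I // u.card = k - 1}} {v A : Finset I}

theorem IsSpannedClique.subset (hv : IsSpannedClique n k S s v) (hk : 2 ≤ k) (hkn : k ≤ n)
    (hs : ∀ u ∈ s, u.1 ⊆ A) : v ⊆ A := by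
  intro x hx
  obtain ⟨u, hxu, huv, huk⟩ := exists_subsuperset_card_eq (n := k - 1)
    (singleton_subset_iff.2 hx) (by rw [card_singleton]; omega) (by rw [hv.1]; omega)
  exact hs _ (hv.2.1 u huk huv) (hxu (mem_singleton_self x))

variable {g : I → J} {f : {u : Finset I // u.card = k - 1} → {u : Finset J // u.card = k - 1}}

theorem card_image_of_injOn_of_subset {u : Finset I} (hg : Set.InjOn g A) (hu : u ⊆ A) :
    (u.image g).card = u.card :=
  card_image_of_injOn (hg.mono (coe_subset.2 hu))

theorem IsSpannedClique.image (hg : Set.InjOn g A)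
    (hSR : ∀ w ⊆ A, w.card = k → (w ∈ S ↔ w.image g ∈ R))
    (hf : ∀ u, u.1 ⊆ A → (f u).1 = u.1.image g)
    (hv : IsSpannedClique n k S s v) (hvA : v ⊆ A) :
    IsSpannedClique n k R (s.image f) (v.image g) := by
  have hcard : ∀ u ⊆ v, (u.image g).card = u.card := fun u huv =>
    card_image_of_injOn_of_subset hg (huv.trans hvA)
  refine ⟨(hcard v subset_rfl).trans hv.1, fun u' hu' hu'v => ?_, fun w' hw'v hw'k => ?_⟩
  · obtain ⟨u, huv, rfl⟩ := subset_image_iff.1 hu'v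
    have huk : u.card = k - 1 := (hcard u huv).symm.trans hu'
    exact mem_image.2 ⟨⟨u, huk⟩, hv.2.1 u huk huv, Subtype.ext (hf _ (huv.trans hvA))⟩
  · obtain ⟨w, hwv, rfl⟩ := subset_image_iff.1 hw'v
    have hwk : w.card = k := (hcard w hwv).symm.trans hw'k
    exact (hSR w (hwv.trans hvA) hwk).1 (hv.2.2 w hwv hwk)

theorem IsSpannedClique.of_image (hg : Set.InjOn g A)
    (hSR : ∀ w ⊆ A, w.card = k → (w ∈ S ↔ w.image g ∈ R))
    (hf : ∀ u, u.1 ⊆ A → (f u).1 = u.1.image g)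
    (hv : IsSpannedClique n k R (s.image f) (v.image g))
    (hvA : v ⊆ A) (hs : ∀ u ∈ s, u.1 ⊆ A) : IsSpannedClique n k S s v := by
  have hcard : ∀ u ⊆ v, (u.image g).card = u.card := fun u huv =>
    card_image_of_injOn_of_subset hg (huv.trans hvA)
  refine ⟨(hcard v subset_rfl).symm.trans hv.1, fun u hu huv => ?_, fun w hwv hwk => ?_⟩
  · obtain ⟨u₀, hu₀, hfu₀⟩ := mem_image.1 <|
      hv.2.1 (u.image g) ((hcard u huv).trans hu) (image_subset_image huv)
    obtain rfl : u₀ = ⟨u, hu⟩ := Subtype.ext <|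
      image_injOn_powerset_of_injOn hg (mem_powerset.2 (hs _ hu₀))
        (mem_powerset.2 (huv.trans hvA)) ((hf _ (hs _ hu₀)).symm.trans (congrArg Subtype.val hfu₀))
    exact hu₀
  · exact (hSR w (hwv.trans hvA) hwk).2
      (hv.2.2 _ (image_subset_image hwv) ((hcard w hwv).trans hwk))

theorem mem_deltaNK_iff_image_mem (hg : Set.InjOn g A)
    (hSR : ∀ w ⊆ A, w.card = k → (w ∈ S ↔ w.image g ∈ R))
    (hf : ∀ u, u.1 ⊆ A → (f u).1 = u.1.image g)
    (hk : 2 ≤ k) (hkn : k ≤ n) (hs : ∀ u ∈ s, u.1 ⊆ A) :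
    s ∈ deltaNK n k S ↔ s.image f ∈ deltaNK n k R := by
  rw [mem_deltaNK_iff, mem_deltaNK_iff]
  refine not_congr ⟨fun ⟨v, hv⟩ => ⟨_, hv.image hg hSR hf (hv.subset hk hkn hs)⟩, ?_⟩
  rintro ⟨v', hv'⟩
  have hfs : ∀ u' ∈ s.image f, u'.1 ⊆ A.image g := by
    simp only [forall_mem_image]
    intro u hu
    rw [hf u (hs u hu)]
    exact image_subset_image (hs u hu)
  obtain ⟨v, hvA, rfl⟩ := subset_image_iff.1 (hv'.subset hk hkn hfs)
  exact ⟨v, hv'.of_image hg hSR hf hvA hs⟩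

end Transfer

theorem Set.InjOn.exists_lift_image {I J : Type*} [DecidableEq J] [Infinite J] {g : I → J}
    {A : Finset I} (hg : Set.InjOn g A) (r : ℕ) :
    ∃ f : {u : Finset I // u.card = r} → {u : Finset J // u.card = r},
      ∀ u, u.1 ⊆ A → (f u).1 = u.1.image g := by
  classical
  obtain ⟨d, hd⟩ := _root_.Infinite.exists_subset_card_eq J r
  refine ⟨fun u => if h : u.1 ⊆ A then
    ⟨u.1.image g, (card_image_of_injOn_of_subset hg h).trans u.2⟩ else ⟨d, hd⟩, fun u hu => ?_⟩
  simp only [dif_pos hu]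

theorem statement9_general (n k : ℕ) (h2 : 2 ≤ k) (hkn : k < n)
    (J : Type y) [Infinite J] (R : Set (Finset J))
    (hrandom : ∀ (m : ℕ) (E : Set (Finset (Fin m))), (∀ v ∈ E, v.card = k) →
      ∃ g : Fin m → J, Function.Injective g ∧
        ∀ v : Finset (Fin m), v.card = k → (v ∈ E ↔ (letI := Classical.decEq J; v.image g) ∈ R))
    (I : Type x) (S : Set (Finset I)) :
    IsInstanceOf (deltaNK n k S) (deltaNK n k R) := by
  classical
  have hR : IsInducedUniversal k R := fun m E hE => by
    obtain ⟨g, hg, hgE⟩ := hrandom m E hE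
    exact ⟨⟨g, hg⟩, fun v hv => (hgE v hv).trans (by rw [map_eq_image]; rfl)⟩
  intro s
  obtain ⟨g, hg, hSR⟩ := hR.exists_injOn S (s.sup Subtype.val)
  obtain ⟨f, hf⟩ := hg.exists_lift_image (k - 1)
  refine ⟨f, fun t hts => ?_⟩
  -- `convert` only reconciles the classical `DecidableEq` instance used by `IsInstanceOf`.
  convert mem_deltaNK_iff_image_mem hg hSR hf h2 hkn.le fun u hu => le_sup (hts hu) using 3

theorem statement9 (n k : ℕ) (h2 : 2 ≤ k) (hkn : k < n)
    (J : Type y) [Countable J] [Infinite J] (R : Set (Finset J))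
    (hR : ∀ v ∈ R, v.card = k)
    (hrandom : ∀ (m : ℕ) (E : Set (Finset (Fin m))), (∀ v ∈ E, v.card = k) →
      ∃ g : Fin m → J, Function.Injective g ∧
        ∀ v : Finset (Fin m), v.card = k → (v ∈ E ↔ (letI := Classical.decEq J; v.image g) ∈ R))
    (I : Type x) (S : Set (Finset I)) (hS : ∀ v ∈ S, v.card = k) :
    IsInstanceOf (deltaNK n k S) (deltaNK n k R) :=
  statement9_general n k h2 hkn J R hrandom I S
end

section
/- Let B be a complete Boolean algebra, U an ultrafilter on B, and λ an infinite cardinal. If U is λ-flexible, then U is λ-regular, i.e. U contains a λ-regular family. -/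
/-!
The ℵ₁-incompleteness of `U` yields a `U`-nonstandard name `n`, namely the disjointification of
the complements of a decreasing sequence in `U` with meet `⊥`. Flexibility then gives a
multiplicative distribution `D` in `U` with `D(s) ≤ ‖n ≥ |s|‖`, and `a_α := D({α})` is regular:
its finite meets are the nonzero values `D(s)`, and an infinite meet lies below every
`‖n ≥ m‖`. Given `b ≠ ⊥`, pick `j` with `b ⊓ n(j) ≠ ⊥`; as `n(j)` is disjoint from
`‖n ≥ j + 1‖`, no `j + 1` of the `a_α` have a common nonzero part below `b ⊓ n(j)`, so a largest
finite set of them that does cuts out an element below `b` deciding every `a_α`.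
-/

universe u

section BA

variable {B : Type u} [CompleteBooleanAlgebra B]

/-- U is an ultrafilter on the complete Boolean algebra B. -/
def IsUltra (U : Set B) : Prop :=
  ⊤ ∈ U ∧ ⊥ ∉ U ∧ (∀ a ∈ U, ∀ b : B, a ≤ b → b ∈ U) ∧
    (∀ a ∈ U, ∀ b ∈ U, a ⊓ b ∈ U) ∧ ∀ a : B, a ∈ U ∨ aᶜ ∈ U

/-- c decides b if c ≤ b or c ≤ bᶜ. -/
def Decides (c b : B) : Prop := c ≤ b ∨ c ≤ bᶜ

/-- A λ-distribution (with index set ι of cardinality λ): a map from finite subsets of λ to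
the nonzero elements of B, sending ∅ to ⊤ and reversing inclusions. -/
def IsDistribution {ι : Type*} (A : Finset ι → B) : Prop :=
  (∀ s, A s ≠ ⊥) ∧ A ∅ = ⊤ ∧ ∀ s t : Finset ι, t ⊆ s → A s ≤ A t

/-- A distribution is multiplicative if A(s) = ⨅_{α∈s} A({α}). -/
def IsMultiplicative {ι : Type*} (A : Finset ι → B) : Prop :=
  ∀ s : Finset ι, A s = s.inf (fun α => A {α})

/-- A family (a_α)_{α<λ} is λ-regular: finite subfamilies have nonzero meet, infinite
subfamilies have meet ⊥, and the nonzero elements deciding every a_α are dense in B₊. -/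
def IsRegularFamily {ι : Type*} (a : ι → B) : Prop :=
  (∀ s : Finset ι, s.inf a ≠ ⊥) ∧
  (∀ X : Set ι, X.Infinite → (⨅ α ∈ X, a α) = ⊥) ∧
  (∀ b : B, b ≠ ⊥ → ∃ c : B, c ≠ ⊥ ∧ c ≤ b ∧ ∀ α : ι, Decides c (a α))

/-- A name for a natural number: a map n : ω → B with pairwise disjoint values
whose supremum is ⊤. -/
def IsName (nm : ℕ → B) : Prop :=
  (∀ i j : ℕ, i ≠ j → Disjoint (nm i) (nm j)) ∧ (⨆ m : ℕ, nm m) = ⊤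

/-- ‖n ≥ m‖ := ⨆_{j≥m} n(j). -/
def nameGe (nm : ℕ → B) (m : ℕ) : B := ⨆ j : ℕ, ⨆ _ : m ≤ j, nm j

/-- n is U-nonstandard if ‖n ≥ m‖ ∈ U for every m. -/
def IsNonstandardName (U : Set B) (nm : ℕ → B) : Prop := ∀ m : ℕ, nameGe nm m ∈ U

/-- U is ℵ₁-incomplete: some decreasing ω-sequence from U has infimum ⊥. -/
def Aleph1Incomplete (U : Set B) : Prop :=
  ∃ c : ℕ → B, (∀ k, c k ∈ U) ∧ Antitone c ∧ (⨅ k : ℕ, c k) = ⊥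


variable {B : Type u} [CompleteBooleanAlgebra B]

/-- U is λ-flexible (with index set ι of cardinality λ): U is ℵ₁-incomplete and for every
U-nonstandard name n there is a multiplicative λ-distribution D in U with
D(s) ≤ ‖n ≥ |s|‖ for every finite s. -/
def IsFlexible (U : Set B) (ι : Type*) : Prop :=
  Aleph1Incomplete U ∧
    ∀ nm : ℕ → B, IsName nm → IsNonstandardName U nm →
      ∃ D : Finset ι → B, IsDistribution D ∧ (∀ s, D s ∈ U) ∧ IsMultiplicative D ∧
        ∀ s : Finset ι, D s ≤ nameGe nm s.card


section Name

variable {nm : ℕ → B}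

theorem nameGe_antitone (nm : ℕ → B) : Antitone (nameGe nm) :=
  fun _ _ h => iSup₂_mono' fun j hj => ⟨j, h.trans hj, le_rfl⟩

theorem iSup_le_partialSups_sup_nameGe (nm : ℕ → B) (m : ℕ) :
    ⨆ j, nm j ≤ partialSups nm m ⊔ nameGe nm (m + 1) := by
  refine iSup_le fun j => ?_
  rcases le_or_gt j m with h | h
  · exact le_sup_of_le_left (le_partialSups_of_le nm h)
  · exact le_sup_of_le_right (le_iSup₂_of_le (f := fun j (_ : m + 1 ≤ j) => nm j) j h le_rfl)

theorem IsName.disjoint_nameGe (hnm : IsName nm) {i m : ℕ} (him : i < m) :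
    Disjoint (nm i) (nameGe nm m) := by
  simp only [nameGe, disjoint_iSup_iff]
  exact fun j hj => hnm.1 i j (by omega)

theorem IsName.exists_inf_ne_bot (hnm : IsName nm) {b : B} (hb : b ≠ ⊥) :
    ∃ j, b ⊓ nm j ≠ ⊥ := by
  by_contra! h
  apply hb
  rw [← inf_top_eq b, ← hnm.2, inf_iSup_eq, iSup_eq_bot]
  exact h

theorem IsName.iInf_nameGe_eq_bot (hnm : IsName nm) : ⨅ m, nameGe nm m = ⊥ := by
  by_contra h
  obtain ⟨j, hj⟩ := hnm.exists_inf_ne_bot h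
  refine hj (disjoint_iff.mp (Disjoint.mono_left (iInf_le _ (j + 1)) ?_))
  exact (hnm.disjoint_nameGe j.lt_succ_self).symm

end Name

theorem Aleph1Incomplete.exists_isName_isNonstandardName {U : Set B}
    (hup : ∀ a ∈ U, ∀ b : B, a ≤ b → b ∈ U) (hU : Aleph1Incomplete U) :
    ∃ nm : ℕ → B, IsName nm ∧ IsNonstandardName U nm := by
  obtain ⟨c, hcU, hc_anti, hc_inf⟩ := hU
  set e : ℕ → B := fun k => (c k)ᶜ
  have he_mono : Monotone e := fun _ _ h => compl_le_compl (hc_anti h)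
  have hname : IsName (disjointed e) := by
    refine ⟨fun i j hij => disjoint_disjointed e hij, ?_⟩
    rw [iSup_disjointed, ← compl_iInf, hc_inf, compl_bot]
  refine ⟨disjointed e, hname, fun m => hup _ (hcU m) _ ?_⟩
  have hcover := iSup_le_partialSups_sup_nameGe (disjointed e) m
  rw [hname.2, partialSups_disjointed, he_mono.partialSups_eq, top_le_iff] at hcover
  calc c m = (e m)ᶜ := (compl_compl _).symm
    _ ≤ nameGe (disjointed e) (m + 1) :=
        codisjoint_iff_compl_le_right.mp (codisjoint_iff.mpr hcover)
    _ ≤ nameGe (disjointed e) m := nameGe_antitone _ m.le_succ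

theorem exists_decides_of_card_le {ι : Type*} (a : ι → B) {c₀ : B} (hc₀ : c₀ ≠ ⊥) {j : ℕ}
    (hbound : ∀ s : Finset ι, c₀ ⊓ s.inf a ≠ ⊥ → s.card ≤ j) :
    ∃ c, c ≠ ⊥ ∧ c ≤ c₀ ∧ ∀ α, Decides c (a α) := by
  classical
  let P : ℕ → Prop := fun n => ∃ s : Finset ι, s.card = n ∧ c₀ ⊓ s.inf a ≠ ⊥
  have hP0 : P 0 := ⟨∅, rfl, by simpa using hc₀⟩
  obtain ⟨s, hs_card, hs⟩ : P (Nat.findGreatest P j) := Nat.findGreatest_spec j.zero_le hP0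
  have hmax : ∀ t : Finset ι, c₀ ⊓ t.inf a ≠ ⊥ → t.card ≤ s.card := fun t ht =>
    hs_card ▸ Nat.le_findGreatest (hbound t ht) ⟨t, rfl, ht⟩
  refine ⟨c₀ ⊓ s.inf a, hs, inf_le_left, fun α => ?_⟩
  by_cases hα : c₀ ⊓ s.inf a ⊓ a α = ⊥
  · exact Or.inr (disjoint_iff.mpr hα).le_compl_right
  · have hins : c₀ ⊓ (insert α s).inf a ≠ ⊥ := by
      rwa [Finset.inf_insert, inf_comm (a α), ← inf_assoc]
    have hαs : α ∈ s := by
      by_contra hαs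
      have := hmax _ hins
      rw [Finset.card_insert_of_notMem hαs] at this
      omega
    exact Or.inl (inf_le_right.trans (Finset.inf_le hαs))

theorem IsName.isRegularFamily {nm : ℕ → B} (hnm : IsName nm) {ι : Type*} {a : ι → B}
    (hfin : ∀ s : Finset ι, s.inf a ≠ ⊥) (hle : ∀ s : Finset ι, s.inf a ≤ nameGe nm s.card) :
    IsRegularFamily a := by
  refine ⟨hfin, fun X hX => ?_, fun b hb => ?_⟩
  · refine le_bot_iff.mp (hnm.iInf_nameGe_eq_bot ▸ le_iInf fun m => ?_)
    obtain ⟨s, hsX, rfl⟩ := hX.exists_subset_card_eq m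
    exact (Finset.le_inf fun α hα => iInf₂_le α (hsX hα)).trans (hle s)
  · obtain ⟨j, hj⟩ := hnm.exists_inf_ne_bot hb
    obtain ⟨c, hc, hcb, hdec⟩ := exists_decides_of_card_le a hj (j := j) fun s hs => by
      by_contra! hcard
      have hdisj : Disjoint (nm j) (nameGe nm (j + 1)) := hnm.disjoint_nameGe j.lt_succ_self
      exact hs <| disjoint_iff.mp <|
        hdisj.mono inf_le_right ((hle s).trans (nameGe_antitone nm hcard))
    exact ⟨c, hc, hcb.trans inf_le_left, hdec⟩

theorem statement11_general {B : Type u} [CompleteBooleanAlgebra B] (U : Set B) (hU : IsUltra U)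
    (ι : Type u)
    (hflex : IsFlexible U ι) :
    ∃ a : ι → B, (∀ α : ι, a α ∈ U) ∧ IsRegularFamily a := by
  obtain ⟨nm, hnm, hnonstd⟩ := hflex.1.exists_isName_isNonstandardName hU.2.2.1
  obtain ⟨D, hD, hDU, hmul, hDle⟩ := hflex.2 nm hnm hnonstd
  refine ⟨fun α => D {α}, fun α => hDU {α}, hnm.isRegularFamily (fun s => ?_) (fun s => ?_)⟩
  · exact hmul s ▸ hD.1 s
  · exact hmul s ▸ hDle s

theorem statement11 {B : Type u} [CompleteBooleanAlgebra B] (U : Set B) (hU : IsUltra U)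
    (lam : Cardinal.{u}) (hlam : Cardinal.aleph0 ≤ lam)
    (ι : Type u) (hι : Cardinal.mk ι = lam)
    (hflex : IsFlexible U ι) :
    ∃ a : ι → B, (∀ α : ι, a α ∈ U) ∧ IsRegularFamily a :=
  statement11_general U hU ι hflex

end BA
end
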